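/- Let Y and Y' be two gradings of the same finite increasing filtration W_• of a finite-dimensional vector space V over a field of characteristic 0. Then there exists a unique nilpotent endomorphism u with u(W_k) ⊆ W_{k-1} for all k such that Y' = e^u Y e^{-u}. (Gradings of W form a torsor under the unipotent group exp(W_{-1}End(V)), where W_{-1}End(V) = {u : u(W_k) ⊆ W_{k-1}}.) -/

import Mathlib

open Module Finset
open scoped DirectSum

namespace Stmt11Aux

variable {k : Type*} [Field k] {V : Type*} [AddCommGroup V] [Module k V]

/-- `u` shifts the filtration `W` down by `p`. -/
def Ndeg (W : ℤ → Submodule k V) (p : ℕ) (u : Module.End k V) : Prop :=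
  ∀ n : ℤ, ∀ v ∈ W n, u v ∈ W (n - (p : ℤ))

variable {W : ℤ → Submodule k V}

lemma Ndeg.mono (hmono : Monotone W) {p q : ℕ} (hpq : p ≤ q) {u} (h : Ndeg W q u) :
    Ndeg W p u := fun n v hv =>
  hmono (by omega : n - (q : ℤ) ≤ n - (p : ℤ)) (h n v hv)

lemma Ndeg.add {p : ℕ} {u v : Module.End k V} (hu : Ndeg W p u) (hv : Ndeg W p v) :
    Ndeg W p (u + v) := fun n x hx => by
  simpa using (W (n - (p : ℤ))).add_mem (hu n x hx) (hv n x hx)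

lemma Ndeg.neg {p : ℕ} {u : Module.End k V} (hu : Ndeg W p u) : Ndeg W p (-u) := fun n x hx => by
  simpa using (W (n - (p : ℤ))).neg_mem (hu n x hx)

lemma Ndeg.sub {p : ℕ} {u v : Module.End k V} (hu : Ndeg W p u) (hv : Ndeg W p v) :
    Ndeg W p (u - v) := by
  simpa [sub_eq_add_neg] using hu.add hv.neg

lemma Ndeg.smul {p : ℕ} {u : Module.End k V} (c : k) (hu : Ndeg W p u) :
    Ndeg W p (c • u) := fun n x hx => by
  simpa using (W (n - (p : ℤ))).smul_mem c (hu n x hx)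

lemma Ndeg.zero {p : ℕ} : Ndeg W p (0 : Module.End k V) := fun n x _ => by
  simp only [LinearMap.zero_apply]
  exact (W (n - (p : ℤ))).zero_mem

lemma Ndeg.sum {ι : Type*} {p : ℕ} {s : Finset ι} {f : ι → Module.End k V}
    (h : ∀ i ∈ s, Ndeg W p (f i)) : Ndeg W p (∑ i ∈ s, f i) := by
  classical
  induction s using Finset.induction_on with
  | empty => simpa using (Ndeg.zero (W := W))
  | insert _ _ hni ih =>
    rw [Finset.sum_insert hni]
    exact (h _ (Finset.mem_insert_self _ _)).add
      (ih fun i hi => h i (Finset.mem_insert_of_mem hi))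

lemma Ndeg.mul {p q : ℕ} {u v : Module.End k V} (hu : Ndeg W p u) (hv : Ndeg W q v) :
    Ndeg W (p + q) (u * v) := fun n x hx => by
  have h1 := hu (n - (q : ℤ)) (v x) (hv n x hx)
  have : n - (q : ℤ) - (p : ℤ) = n - ((p + q : ℕ) : ℤ) := by push_cast; ring
  rw [this] at h1
  simpa [Module.End.mul_apply] using h1

lemma Ndeg.pow {u : Module.End k V} (hu : Ndeg W 1 u) : ∀ j : ℕ, Ndeg W j (u ^ j) := by
  intro j
  induction j with
  | zero => intro n x hx; simpa using hx
  | succ j ih =>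
    rw [pow_succ]
    exact ih.mul hu

lemma Ndeg.eq_zero {a b : ℤ} (hbot : W a = ⊥) (htop : W b = ⊤) (hmono : Monotone W)
    {M : ℕ} (hM : b - a ≤ (M : ℤ)) {u : Module.End k V} (h : Ndeg W M u) : u = 0 := by
  ext v
  have hv : v ∈ W b := by rw [htop]; trivial
  have h1 : u v ∈ W (b - (M : ℤ)) := h b v hv
  have h2 : u v ∈ W a := hmono (by omega) h1
  rw [hbot] at h2
  simpa using h2

/-- key identity helper -/
private lemma pow_succ_sub (u d : Module.End k V) (j : ℕ) :
    (u + d) ^ (j + 1) - u ^ (j + 1) =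
      ((u + d) ^ j - u ^ j) * (u + d) + u ^ j * d := by
  rw [pow_succ, pow_succ]
  noncomm_ring

lemma aux_pow_sub (hmono : Monotone W) {q : ℕ} (hq : 1 ≤ q) {u d : Module.End k V}
    (hu : Ndeg W 1 u) (hd : Ndeg W q d) :
    ∀ j : ℕ, 1 ≤ j → Ndeg W q ((u + d) ^ j - u ^ j) := by
  have hud : Ndeg W 1 (u + d) := hu.add (hd.mono hmono hq)
  intro j hj
  induction j with
  | zero => omega
  | succ j ih =>
    rcases Nat.eq_or_lt_of_le hj with h0 | h1
    · -- j + 1 = 1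
      have : j = 0 := by omega
      subst this
      simpa [pow_one] using hd
    · have hj1 : 1 ≤ j := by omega
      rw [pow_succ_sub]
      have h1 : Ndeg W (q + 1) (((u + d) ^ j - u ^ j) * (u + d)) := (ih hj1).mul hud
      have h2 : Ndeg W (j + q) (u ^ j * d) := (hu.pow j).mul hd
      exact (h1.mono hmono (by omega)).add (h2.mono hmono (by omega))

lemma aux_pow_sub2 (hmono : Monotone W) {q : ℕ} (hq : 1 ≤ q) {u d : Module.End k V}
    (hu : Ndeg W 1 u) (hd : Ndeg W q d) :
    ∀ j : ℕ, 2 ≤ j → Ndeg W (q + 1) ((u + d) ^ j - u ^ j) := by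
  have hud : Ndeg W 1 (u + d) := hu.add (hd.mono hmono hq)
  intro j hj
  obtain ⟨i, rfl⟩ : ∃ i, j = i + 1 := ⟨j - 1, by omega⟩
  have hi1 : 1 ≤ i := by omega
  rw [pow_succ_sub]
  have h1 : Ndeg W (q + 1) (((u + d) ^ i - u ^ i) * (u + d)) :=
    (aux_pow_sub hmono hq hu hd i hi1).mul hud
  have h2 : Ndeg W (i + q) (u ^ i * d) := (hu.pow i).mul hd
  exact h1.add (h2.mono hmono (by omega))

/-- The core estimate: `∑_{j<T} (j!)⁻¹ ((u+d)^j - u^j) - d` drops degree `q+1`. -/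
lemma sum_core (hmono : Monotone W) {q : ℕ} (hq : 1 ≤ q) {u d : Module.End k V}
    (hu : Ndeg W 1 u) (hd : Ndeg W q d) :
    ∀ T : ℕ, 2 ≤ T →
      Ndeg W (q + 1)
        ((∑ j ∈ range T, ((j.factorial : k))⁻¹ • ((u + d) ^ j - u ^ j)) - d) := by
  intro T hT
  induction T, hT using Nat.le_induction with
  | base =>
    have h2 : (∑ j ∈ range 2, ((j.factorial : k))⁻¹ • ((u + d) ^ j - u ^ j)) - d = 0 := by
      simp [Finset.sum_range_succ, pow_one, Nat.factorial]
    rw [h2]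
    exact Ndeg.zero
  | succ T hT ih =>
    have key : (∑ j ∈ range (T + 1), ((j.factorial : k))⁻¹ • ((u + d) ^ j - u ^ j)) - d
        = ((∑ j ∈ range T, ((j.factorial : k))⁻¹ • ((u + d) ^ j - u ^ j)) - d)
          + ((T.factorial : k))⁻¹ • ((u + d) ^ T - u ^ T) := by
      rw [Finset.sum_range_succ]; abel
    rw [key]
    exact ih.add ((aux_pow_sub2 hmono hq hu hd T (by omega)).smul _)

/-- Truncated exponential. -/
noncomputable def truncExp (T : ℕ) (x : Module.End k V) : Module.End k V :=
  ∑ j ∈ Finset.range T, ((j.factorial : k))⁻¹ • x ^ j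

lemma truncExp_sub (T : ℕ) (u d : Module.End k V) :
    truncExp T (u + d) - truncExp T u
      = ∑ j ∈ range T, ((j.factorial : k))⁻¹ • ((u + d) ^ j - u ^ j) := by
  rw [truncExp, truncExp, ← Finset.sum_sub_distrib]
  exact Finset.sum_congr rfl fun j _ => (smul_sub _ _ _).symm

lemma truncExp_zero (T : ℕ) : truncExp (T + 1) (0 : Module.End k V) = 1 := by
  rw [truncExp, Finset.sum_range_succ']
  simp [zero_pow, Nat.factorial]

lemma truncExp_congr {u : Module.End k V} {n m : ℕ} (hnm : n ≤ m) (hn : u ^ n = 0) :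
    truncExp m u = truncExp n u := by
  have hIco : ∑ j ∈ Finset.Ico n m, ((j.factorial : k))⁻¹ • u ^ j = 0 :=
    Finset.sum_eq_zero fun j hj => by
      obtain ⟨h1, _⟩ := Finset.mem_Ico.mp hj
      rw [show j = n + (j - n) by omega, pow_add, hn, zero_mul, smul_zero]
  rw [truncExp, truncExp, range_eq_Ico,
    ← Finset.sum_Ico_consecutive _ (Nat.zero_le n) hnm, hIco, add_zero, range_eq_Ico]

/-- successive approximation: solving `truncExp T u = g` up to degree `p`. -/
lemma approx (hmono : Monotone W) {g : Module.End k V} (hg : Ndeg W 1 (g - 1))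
    {T : ℕ} (hT : 2 ≤ T) :
    ∀ p : ℕ, 1 ≤ p → ∃ u : Module.End k V, Ndeg W 1 u ∧ Ndeg W p (g - truncExp T u) := by
  intro p hp
  induction p, hp using Nat.le_induction with
  | base =>
    refine ⟨0, Ndeg.zero, ?_⟩
    obtain ⟨T', rfl⟩ : ∃ T', T = T' + 1 := ⟨T - 1, by omega⟩
    rw [truncExp_zero]
    exact hg
  | succ p hp ih =>
    obtain ⟨u, hu, hd⟩ := ih
    refine ⟨u + (g - truncExp T u), hu.add (hd.mono hmono hp), ?_⟩
    have key : g - truncExp T (u + (g - truncExp T u))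
        = -((∑ j ∈ range T, ((j.factorial : k))⁻¹ •
              ((u + (g - truncExp T u)) ^ j - u ^ j)) - (g - truncExp T u)) := by
      rw [← truncExp_sub]
      abel
    rw [key]
    exact (sum_core hmono hp hu hd T hT).neg

/-- Injectivity of the truncated exponential on degree-lowering endomorphisms. -/
lemma truncExp_inj (hmono : Monotone W) {a b : ℤ} (hbot : W a = ⊥) (htop : W b = ⊤)
    {M : ℕ} (hM : b - a ≤ (M : ℤ)) {T : ℕ} (hT : 2 ≤ T) {u v : Module.End k V}
    (hu : Ndeg W 1 u) (hv : Ndeg W 1 v) (h : truncExp T u = truncExp T v) : u = v := by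
  have claim : ∀ p : ℕ, 1 ≤ p → Ndeg W p (u - v) := by
    intro p hp
    induction p, hp using Nat.le_induction with
    | base => exact hu.sub hv
    | succ p hp ih =>
      have huv : u = v + (u - v) := by abel
      have h0 : (∑ j ∈ range T, ((j.factorial : k))⁻¹ • ((v + (u - v)) ^ j - v ^ j)) = 0 := by
        rw [← truncExp_sub, ← huv, h, sub_self]
      have h1 := sum_core hmono hp hv ih T hT
      rw [h0] at h1
      simpa using h1.neg
  have : Ndeg W M (u - v) := (claim (max M 1) (le_max_right _ _)).mono hmono (le_max_left _ _)
  have := Ndeg.eq_zero hbot htop hmono hM this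
  rwa [sub_eq_zero] at this

/-- Two endomorphisms agreeing on all eigenspaces of an internally-decomposing `Y` agree. -/
lemma ext_of_eigenspaces {Y : Module.End k V}
    (hY : DirectSum.IsInternal (fun n : ℤ => Y.eigenspace (n : k)))
    {f f' : Module.End k V}
    (h : ∀ n : ℤ, ∀ v ∈ Y.eigenspace ((n : ℤ) : k), f v = f' v) : f = f' := by
  ext v
  have hv : v ∈ ⨆ n : ℤ, Y.eigenspace ((n : ℤ) : k) := by
    rw [hY.submodule_iSup_eq_top]; trivial
  refine Submodule.iSup_induction (motive := fun x => f x = f' x) _ hv h (by simp) ?_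
  intro x y hx hy
  have hx' : f x = f' x := hx
  have hy' : f y = f' y := hy
  show f (x + y) = f' (x + y)
  rw [map_add, map_add, hx', hy']

end Stmt11Aux

open Stmt11Aux

/-- Two gradings `Y`, `Y'` of the same finite increasing
filtration `W` of a finite-dimensional vector space over a field of
characteristic 0 differ by conjugation by `e^u` for a unique `u` with
`u(W_k) ⊆ W_{k-1}` (such `u` is automatically nilpotent, and for any `n` with
`u^n = 0` the exponential is the finite sum `e^u = ∑_{j<n} u^j/j!`, so the
conjugation relation reads `Y' e^u = e^u Y`). -/
theorem stmt11 (k : Type*) [Field k] [CharZero k] (V : Type*) [AddCommGroup V]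
    [Module k V] [FiniteDimensional k V]
    (W : ℤ → Submodule k V) (hmono : Monotone W)
    (hbot : ∃ a : ℤ, W a = ⊥) (htop : ∃ b : ℤ, W b = ⊤)
    (Y Y' : Module.End k V)
    (hY : DirectSum.IsInternal (fun n : ℤ => Y.eigenspace (n : k)))
    (hY' : DirectSum.IsInternal (fun n : ℤ => Y'.eigenspace (n : k)))
    (hgrY : ∀ n : ℤ, W n = ⨆ i : {i : ℤ // i ≤ n}, Y.eigenspace ((i : ℤ) : k))
    (hgrY' : ∀ n : ℤ, W n = ⨆ i : {i : ℤ // i ≤ n}, Y'.eigenspace ((i : ℤ) : k)) :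
    ∃! u : Module.End k V,
      (∀ n : ℤ, (W n).map u ≤ W (n - 1)) ∧
      IsNilpotent u ∧
      ∀ n : ℕ, u ^ n = 0 →
        Y' * (∑ j ∈ Finset.range n, ((j.factorial : k))⁻¹ • u ^ j) =
          (∑ j ∈ Finset.range n, ((j.factorial : k))⁻¹ • u ^ j) * Y := by
  classical
  obtain ⟨a, hbot⟩ := hbot
  obtain ⟨b, htop⟩ := htop
  set M : ℕ := (b - a).toNat with hMdef
  have hMle : b - a ≤ (M : ℤ) := Int.self_le_toNat _
  set T : ℕ := M + 2 with hTdef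
  have hT2 : 2 ≤ T := by omega
  -- eigenspaces lie in the filtration
  have hYleW : ∀ n : ℤ, Y.eigenspace ((n : ℤ) : k) ≤ W n := by
    intro n
    rw [hgrY n]
    exact le_iSup (fun i : {i : ℤ // i ≤ n} => Y.eigenspace ((i : ℤ) : k)) ⟨n, le_refl n⟩
  have hY'leW : ∀ n : ℤ, Y'.eigenspace ((n : ℤ) : k) ≤ W n := by
    intro n
    rw [hgrY' n]
    exact le_iSup (fun i : {i : ℤ // i ≤ n} => Y'.eigenspace ((i : ℤ) : k)) ⟨n, le_refl n⟩
  -- construction of the intertwiner g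
  set e : (⨁ n : ℤ, Y.eigenspace ((n : ℤ) : k)) ≃ₗ[k] V :=
    LinearEquiv.ofBijective (DirectSum.coeLinearMap _) hY with he
  set e' : (⨁ n : ℤ, Y'.eigenspace ((n : ℤ) : k)) ≃ₗ[k] V :=
    LinearEquiv.ofBijective (DirectSum.coeLinearMap _) hY' with he'
  set π : ℤ → Module.End k V := fun n =>
    (Y'.eigenspace ((n : ℤ) : k)).subtype ∘ₗ
      (DirectSum.component k ℤ (fun m : ℤ => Y'.eigenspace ((m : ℤ) : k)) n) ∘ₗ
      e'.symm.toLinearMap with hπ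
  have hπmem : ∀ n v, π n v ∈ Y'.eigenspace ((n : ℤ) : k) := by
    intro n v
    simp only [hπ, LinearMap.coe_comp, Function.comp_apply, Submodule.coe_subtype]
    exact Submodule.coe_mem _
  have hπself : ∀ n v, v ∈ Y'.eigenspace ((n : ℤ) : k) → π n v = v := by
    intro n v hv
    simp only [hπ, LinearMap.coe_comp, Function.comp_apply, Submodule.coe_subtype]
    have h1 : (e'.symm v) n = ⟨v, hv⟩ := hY'.ofBijective_coeLinearMap_of_mem hv
    have h2 : (DirectSum.component k ℤ (fun m : ℤ => Y'.eigenspace ((m : ℤ) : k)) n)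
        (e'.symm.toLinearMap v) = (e'.symm v) n := rfl
    rw [h2, h1]
  have hπne : ∀ (i n : ℤ), i ≠ n → ∀ v, v ∈ Y'.eigenspace ((i : ℤ) : k) → π n v = 0 := by
    intro i n hin v hv
    simp only [hπ, LinearMap.coe_comp, Function.comp_apply, Submodule.coe_subtype]
    have h1 : (e'.symm v) n = 0 := hY'.ofBijective_coeLinearMap_of_mem_ne hin hv
    have h2 : (DirectSum.component k ℤ (fun m : ℤ => Y'.eigenspace ((m : ℤ) : k)) n)
        (e'.symm.toLinearMap v) = (e'.symm v) n := rfl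
    rw [h2, h1]
    rfl
  set g : Module.End k V :=
    (DirectSum.toModule k ℤ V fun n : ℤ =>
      (π n) ∘ₗ (Y.eigenspace ((n : ℤ) : k)).subtype) ∘ₗ e.symm.toLinearMap with hg
  have hg_eig : ∀ n v (hv : v ∈ Y.eigenspace ((n : ℤ) : k)), g v = π n v := by
    intro n v hv
    have hsymm : e.symm v = DirectSum.lof k ℤ (fun m : ℤ => Y.eigenspace ((m : ℤ) : k)) n
        ⟨v, hv⟩ := by
      apply e.injective
      rw [LinearEquiv.apply_symm_apply, he]
      exact (DirectSum.coeLinearMap_of _ n ⟨v, hv⟩).symm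
    simp only [hg, LinearMap.coe_comp, Function.comp_apply, LinearEquiv.coe_coe]
    rw [hsymm, DirectSum.toModule_lof]
    rfl
  -- g intertwines Y and Y'
  have hgY : Y' * g = g * Y := by
    apply ext_of_eigenspaces hY
    intro n v hv
    have hYv : Y v = ((n : ℤ) : k) • v := Module.End.mem_eigenspace_iff.mp hv
    have h1 : (Y' * g) v = ((n : ℤ) : k) • g v := by
      rw [Module.End.mul_apply, hg_eig n v hv]
      exact Module.End.mem_eigenspace_iff.mp (hπmem n v)
    have h2 : (g * Y) v = ((n : ℤ) : k) • g v := by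
      rw [Module.End.mul_apply, hYv, map_smul]
    rw [h1, h2]
  -- v - π n v ∈ W (n-1) for v ∈ W n
  have hL : ∀ n : ℤ, ∀ v ∈ W n, v - π n v ∈ W (n - 1) := by
    intro n v hv
    have hWle : W n ≤ Submodule.comap (LinearMap.id - (π n)) (W (n - 1)) := by
      rw [hgrY' n]
      apply iSup_le
      rintro ⟨i, hi⟩ x hx
      simp only [Submodule.mem_comap, LinearMap.sub_apply, LinearMap.id_apply]
      by_cases hin : i = n
      · subst hin
        rw [hπself i x hx, sub_self]
        exact (W (i - 1)).zero_mem
      · rw [hπne i n hin x hx, sub_zero]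
        exact hmono (show i ≤ n - 1 by omega) (hY'leW i hx)
    have := hWle hv
    simpa using this
  -- g - 1 lowers the filtration
  have hg1 : Ndeg W 1 (g - 1) := by
    intro m v hv
    rw [hgrY m] at hv
    have goal : g v - v ∈ W (m - 1) := by
      refine Submodule.iSup_induction (motive := fun x => g x - x ∈ W (m - 1)) _ hv ?_ ?_ ?_
      · rintro ⟨i, hi⟩ x hx
        have hxW : x ∈ W i := hYleW i hx
        have : g x - x = -(x - π i x) := by rw [hg_eig i x hx]; abel
        rw [this]
        exact (W (m - 1)).neg_mem (hmono (by omega : i - 1 ≤ m - 1) (hL i x hxW))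
      · simp
      · intro x y hx hy
        have : g (x + y) - (x + y) = (g x - x) + (g y - y) := by rw [map_add]; abel
        rw [this]
        exact (W (m - 1)).add_mem hx hy
    have : ((1 : ℕ) : ℤ) = (1 : ℤ) := by norm_num
    rw [this]
    simpa using goal
  -- uniqueness of intertwiners in 1 + N
  have hinter_unique : ∀ g₁ g₂ : Module.End k V, Y' * g₁ = g₁ * Y → Y' * g₂ = g₂ * Y →
      Ndeg W 1 (g₁ - 1) → Ndeg W 1 (g₂ - 1) → g₁ = g₂ := by
    intro g₁ g₂ h₁ h₂ hn₁ hn₂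
    apply ext_of_eigenspaces hY
    intro n v hv
    have hvW : v ∈ W n := hYleW n hv
    have hYv : Y v = ((n : ℤ) : k) • v := Module.End.mem_eigenspace_iff.mp hv
    have hgv : Y' (g₁ v) = ((n : ℤ) : k) • g₁ v := by
      have := congrArg (fun f : Module.End k V => f v) h₁
      simp only [Module.End.mul_apply] at this
      rw [this, hYv, map_smul]
    have hhv : Y' (g₂ v) = ((n : ℤ) : k) • g₂ v := by
      have := congrArg (fun f : Module.End k V => f v) h₂
      simp only [Module.End.mul_apply] at this
      rw [this, hYv, map_smul]
    have hw1 : g₁ v - g₂ v ∈ Y'.eigenspace ((n : ℤ) : k) := by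
      rw [Module.End.mem_eigenspace_iff, map_sub, hgv, hhv, smul_sub]
    have hw2 : g₁ v - g₂ v ∈ W (n - 1) := by
      have e₁ := hn₁ n v hvW
      have e₂ := hn₂ n v hvW
      have : g₁ v - g₂ v = (g₁ - 1) v - (g₂ - 1) v := by
        simp only [LinearMap.sub_apply, Module.End.one_apply]; abel
      rw [this]
      have hcast : n - ((1 : ℕ) : ℤ) = n - 1 := by norm_num
      rw [hcast] at e₁ e₂
      exact (W (n - 1)).sub_mem e₁ e₂
    have hdisj := hY'.submodule_iSupIndep n
    have hWle : W (n - 1) ≤ ⨆ (j : ℤ) (_ : j ≠ n), Y'.eigenspace ((j : ℤ) : k) := by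
      rw [hgrY' (n - 1)]
      apply iSup_le
      rintro ⟨i, hi⟩
      exact le_iSup_of_le i (le_iSup_of_le (by omega) le_rfl)
    have : g₁ v - g₂ v = 0 :=
      Submodule.disjoint_def.mp hdisj _ hw1 (hWle hw2)
    exact sub_eq_zero.mp this
  -- bound: Ndeg W M x → x = 0
  have hzero : ∀ x : Module.End k V, Ndeg W M x → x = 0 := fun x hx =>
    Ndeg.eq_zero hbot htop hmono hMle hx
  have hnil : ∀ x : Module.End k V, Ndeg W 1 x → x ^ M = 0 := fun x hx =>
    hzero _ (hx.pow M)
  -- existence of u with truncExp T u = g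
  obtain ⟨u, hu1, hud⟩ := approx hmono hg1 hT2 (max M 1) (le_max_right _ _)
  have hgu : g = truncExp T u := by
    have h0 := hzero _ ((hud).mono hmono (le_max_left M 1))
    rwa [sub_eq_zero] at h0
  have huM : u ^ M = 0 := hnil u hu1
  have huT : u ^ T = 0 := by
    rw [hTdef, pow_add, huM, zero_mul]
  -- the three conditions for u
  refine ⟨u, ⟨?_, ⟨M, huM⟩, ?_⟩, ?_⟩
  · -- condition 1
    intro n
    rintro x ⟨v, hv, rfl⟩
    have := hu1 n v hv
    have hcast : n - ((1 : ℕ) : ℤ) = n - 1 := by norm_num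
    rwa [hcast] at this
  · -- condition 3
    intro n hn
    have hEn : (∑ j ∈ Finset.range n, ((j.factorial : k))⁻¹ • u ^ j) = truncExp T u := by
      rcases le_total n T with hle | hle
      · rw [truncExp_congr hle hn]; rfl
      · exact truncExp_congr (u := u) hle huT
    rw [hEn, ← hgu]
    exact hgY
  · -- uniqueness
    rintro u' ⟨h1, ⟨m, hm⟩, h3⟩
    have hu'1 : Ndeg W 1 u' := by
      intro n v hv
      have := h1 n (Submodule.mem_map_of_mem hv)
      have hcast : n - ((1 : ℕ) : ℤ) = n - 1 := by norm_num
      rwa [hcast]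
    have hu'T : u' ^ T = 0 := by
      rw [hTdef, pow_add, hnil u' hu'1, zero_mul]
    have hInt : Y' * truncExp T u' = truncExp T u' * Y := h3 T hu'T
    have hE1' : Ndeg W 1 (truncExp T u' - 1) := by
      have hsplit : truncExp T u'
          = (∑ j ∈ Finset.range (M + 1), (((j + 1).factorial : k))⁻¹ • u' ^ (j + 1)) + 1 := by
        rw [truncExp, hTdef, Finset.sum_range_succ']
        simp [Nat.factorial]
      rw [hsplit, add_sub_cancel_right]
      exact Ndeg.sum fun j _ =>
        (((hu'1.pow (j + 1)).mono hmono (by omega)).smul _)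
    have hgE : Y' * truncExp T u = truncExp T u * Y := by rw [← hgu]; exact hgY
    have hE1 : Ndeg W 1 (truncExp T u - 1) := by rw [← hgu]; exact hg1
    have hEeq : truncExp T u' = truncExp T u :=
      hinter_unique _ _ hInt hgE hE1' hE1
    exact truncExp_inj hmono hbot htop hMle hT2 hu'1 hu1 hEeq
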